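/- arXiv:1706.07620 — 3 statements merged into one kernel-verified Lean document; each statement's English description precedes it below -/
import Mathlib

section
/- Let A be a real symmetric N×N matrix with eigenvalues 0 < Λ₁ ≤ … ≤ Λ_N ≤ 1, let α ∈ (0,1), β a positive integer, and r a rational function satisfying |t^{β−α} − r(t)| ≤ E for all t ∈ [0,1] (with r defined at each eigenvalue). Then for every γ ∈ ℝ and every f ∈ ℝ^N, ‖A^{−β} r(A) f − A^{−α} f‖_{A^{γ+β}} ≤ E · ‖f‖_{A^{γ−β}}, where ‖v‖_{A^s}² = ⟨A^s v, v⟩. -/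
open Matrix

/-- Fractional power `A^s` of a symmetric matrix given by its spectral
decomposition `A = W (diag Λ) Wᵀ` with `W` orthogonal. -/
noncomputable def matPow {N : ℕ} (W : Matrix (Fin N) (Fin N) ℝ) (Λ : Fin N → ℝ) (s : ℝ) :
    Matrix (Fin N) (Fin N) ℝ :=
  W * Matrix.diagonal (fun i => Real.rpow (Λ i) s) * Wᵀ

lemma quad_form {N : ℕ} (W : Matrix (Fin N) (Fin N) ℝ) (c : Fin N → ℝ) (v : Fin N → ℝ) :
    (W * Matrix.diagonal c * Wᵀ).mulVec v ⬝ᵥ v = ∑ i, c i * (Wᵀ.mulVec v i)^2 := by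
  rw [← mulVec_mulVec, ← mulVec_mulVec]
  rw [dotProduct_comm, dotProduct_mulVec, ← mulVec_transpose, dotProduct_comm]
  simp [dotProduct, Matrix.mulVec_diagonal]
  ring_nf

lemma sandwich_sub {N : ℕ} (W : Matrix (Fin N) (Fin N) ℝ) (a b : Fin N → ℝ) :
    W * Matrix.diagonal a * Wᵀ - W * Matrix.diagonal b * Wᵀ
      = W * Matrix.diagonal (fun i => a i - b i) * Wᵀ := by
  rw [← Matrix.sub_mul, ← Matrix.mul_sub]
  congr 1
  ext i j
  by_cases h : i = j <;> simp [Matrix.diagonal_apply, h]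

lemma sandwich_mul {N : ℕ} (W : Matrix (Fin N) (Fin N) ℝ) (hWW : Wᵀ * W = 1)
    (a b : Fin N → ℝ) :
    (W * Matrix.diagonal a * Wᵀ) * (W * Matrix.diagonal b * Wᵀ)
      = W * Matrix.diagonal (fun i => a i * b i) * Wᵀ := by
  simp only [Matrix.mul_assoc]
  rw [← Matrix.mul_assoc Wᵀ W, hWW, Matrix.one_mul,
    ← Matrix.mul_assoc (Matrix.diagonal a), Matrix.diagonal_mul_diagonal]

/-- Spectral error estimate for the BURA approximation:
`‖A^{-β} r(A) f - A^{-α} f‖_{A^{γ+β}} ≤ E ‖f‖_{A^{γ-β}}`. -/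
theorem bura_error_estimate {N : ℕ} (W : Matrix (Fin N) (Fin N) ℝ) (Λ : Fin N → ℝ)
    (hW : W * Wᵀ = 1) (hΛ : ∀ i, Λ i ∈ Set.Ioc (0 : ℝ) 1)
    (A : Matrix (Fin N) (Fin N) ℝ) (hA : A = W * Matrix.diagonal Λ * Wᵀ)
    (α : ℝ) (hα : α ∈ Set.Ioo (0 : ℝ) 1) (β : ℕ) (hβ : 0 < β)
    (r : ℝ → ℝ) (E : ℝ)
    (hr : ∀ t ∈ Set.Icc (0 : ℝ) 1, |Real.rpow t ((β : ℝ) - α) - r t| ≤ E)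
    (γ : ℝ) (f : Fin N → ℝ) :
    let rA := W * Matrix.diagonal (fun i => r (Λ i)) * Wᵀ
    let e := (matPow W Λ (-(β : ℝ)) * rA).mulVec f - (matPow W Λ (-α)).mulVec f
    Real.sqrt ((matPow W Λ (γ + β)).mulVec e ⬝ᵥ e) ≤
      E * Real.sqrt ((matPow W Λ (γ - β)).mulVec f ⬝ᵥ f) := by
  intro rA e
  unfold matPow
  have hWW : Wᵀ * W = 1 := mul_eq_one_comm.mp hW
  have hE : 0 ≤ E := le_trans (abs_nonneg _) (hr 1 ⟨zero_le_one, le_refl 1⟩)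
  set g : Fin N → ℝ := Wᵀ.mulVec f with hg
  set d : Fin N → ℝ :=
    fun i => Real.rpow (Λ i) (-(β:ℝ)) * r (Λ i) - Real.rpow (Λ i) (-α) with hd
  have he : e = (W * Matrix.diagonal d * Wᵀ).mulVec f := by
    show ((W * Matrix.diagonal (fun i => Real.rpow (Λ i) (-(β:ℝ))) * Wᵀ) * rA).mulVec f
      - (W * Matrix.diagonal (fun i => Real.rpow (Λ i) (-α)) * Wᵀ).mulVec f = _
    rw [show rA = W * Matrix.diagonal (fun i => r (Λ i)) * Wᵀ from rfl,
      sandwich_mul W hWW, ← Matrix.sub_mulVec, sandwich_sub]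
  have hge : Wᵀ.mulVec e = fun i => d i * g i := by
    rw [he, Matrix.mulVec_mulVec, ← Matrix.mul_assoc, ← Matrix.mul_assoc, hWW,
      Matrix.one_mul, ← Matrix.mulVec_mulVec]
    funext i
    simp [Matrix.mulVec_diagonal, hg]
  have hL : (W * Matrix.diagonal (fun i => Real.rpow (Λ i) (γ + β)) * Wᵀ).mulVec e ⬝ᵥ e
      = ∑ i, Real.rpow (Λ i) (γ + β) * (d i * g i)^2 := by
    rw [quad_form, hge]
  have hR : (W * Matrix.diagonal (fun i => Real.rpow (Λ i) (γ - β)) * Wᵀ).mulVec f ⬝ᵥ f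
      = ∑ i, Real.rpow (Λ i) (γ - β) * (g i)^2 := quad_form W _ f
  have key : ∀ i, Real.rpow (Λ i) (γ + β) * (d i * g i)^2
      ≤ E^2 * (Real.rpow (Λ i) (γ - β) * (g i)^2) := by
    intro i
    obtain ⟨ht0, ht1⟩ := hΛ i
    set t := Λ i with htdef
    have hmul : ∀ a b : ℝ, Real.rpow t a * Real.rpow t b = Real.rpow t (a + b) :=
      fun a b => (Real.rpow_add ht0 a b).symm
    have hdi : d i = Real.rpow t (-(β:ℝ)) * (r t - Real.rpow t ((β:ℝ) - α)) := by
      rw [hd]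
      simp only [mul_sub]
      rw [hmul]
      have : -(β:ℝ) + ((β:ℝ) - α) = -α := by ring
      rw [this]
    have hx : (r t - Real.rpow t ((β:ℝ) - α))^2 ≤ E^2 := by
      have h1 := hr t ⟨le_of_lt ht0, ht1⟩
      calc (r t - Real.rpow t ((β:ℝ) - α))^2 = |Real.rpow t ((β:ℝ) - α) - r t|^2 := by
            rw [sq_abs]; ring
        _ ≤ E^2 := pow_le_pow_left₀ (abs_nonneg _) h1 2
    have hpow : Real.rpow t (γ + β) * (Real.rpow t (-(β:ℝ)))^2 = Real.rpow t (γ - β) := by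
      rw [sq, hmul, hmul]
      congr 1
      ring
    calc Real.rpow t (γ + β) * (d i * g i)^2
        = Real.rpow t (γ + β) * (Real.rpow t (-(β:ℝ)))^2
            * ((r t - Real.rpow t ((β:ℝ) - α))^2 * (g i)^2) := by rw [hdi]; ring
      _ = Real.rpow t (γ - β) * ((r t - Real.rpow t ((β:ℝ) - α))^2 * (g i)^2) := by
          rw [hpow]
      _ ≤ Real.rpow t (γ - β) * (E^2 * (g i)^2) := by
          apply mul_le_mul_of_nonneg_left _ (Real.rpow_nonneg (le_of_lt ht0) _)
          exact mul_le_mul_of_nonneg_right hx (sq_nonneg _)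
      _ = E^2 * (Real.rpow t (γ - β) * (g i)^2) := by ring
  rw [hL, hR]
  have hsum : ∑ i, Real.rpow (Λ i) (γ + β) * (d i * g i)^2
      ≤ E^2 * ∑ i, Real.rpow (Λ i) (γ - β) * (g i)^2 := by
    rw [Finset.mul_sum]
    exact Finset.sum_le_sum fun i _ => key i
  calc Real.sqrt (∑ i, Real.rpow (Λ i) (γ + β) * (d i * g i)^2)
      ≤ Real.sqrt (E^2 * ∑ i, Real.rpow (Λ i) (γ - β) * (g i)^2) := Real.sqrt_le_sqrt hsum
    _ = E * Real.sqrt (∑ i, Real.rpow (Λ i) (γ - β) * (g i)^2) := by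
        rw [Real.sqrt_mul (sq_nonneg E), Real.sqrt_sq hE]
end

section
/- If r is a rational function with r(t) = c₀/t + Σ_{j=1}^{k} c_j/(t − d_j) where c₀ ≥ 0, c_j ≥ 0, d_j < 0, and A is an SPD M-matrix with spectrum in (0,1], then the matrix r(A) = c₀ A^{-1} + Σ_{j=1}^k c_j (A − d_j I)^{-1} is symmetric, positive semidefinite, and entrywise nonnegative. -/
open Matrix Filter Topology Finset
open scoped Pointwise

/-- Scalar multiple of a positive semidefinite real matrix by a nonnegative scalar. -/
lemma posSemidef_smul_aux {N : ℕ} {M : Matrix (Fin N) (Fin N) ℝ} (hM : M.PosSemidef)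
    {c : ℝ} (hc : 0 ≤ c) : (c • M).PosSemidef := by
  refine ⟨?_, fun x => ?_⟩
  · unfold Matrix.IsHermitian
    rw [conjTranspose_smul, hM.1]
    simp
  · exact (hM.smul hc).2 x

/-- Scalar multiple of a positive definite real matrix by a positive scalar. -/
lemma posDef_smul_aux {N : ℕ} {M : Matrix (Fin N) (Fin N) ℝ} (hM : M.PosDef)
    {c : ℝ} (hc : 0 < c) : (c • M).PosDef := by
  refine ⟨?_, fun x hx => ?_⟩
  · unfold Matrix.IsHermitian
    rw [conjTranspose_smul, hM.1]
    simp
  · exact (hM.smul hc).2 hx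

/-- Entries of powers of an entrywise nonnegative matrix are nonnegative. -/
lemma pow_entry_nonneg_aux {N : ℕ} {B : Matrix (Fin N) (Fin N) ℝ}
    (hB : ∀ i j, 0 ≤ B i j) : ∀ (n : ℕ) (i j : Fin N), 0 ≤ (B ^ n) i j := by
  intro n
  induction n with
  | zero =>
    intro i j
    rw [pow_zero]
    by_cases h : i = j
    · simp [h, Matrix.one_apply]
    · simp [Matrix.one_apply_ne h]
  | succ n ih =>
    intro i j
    rw [pow_succ, Matrix.mul_apply]
    exact Finset.sum_nonneg fun l _ => mul_nonneg (ih i l) (hB l j)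

/-- Core lemma: the inverse of a normalized SPD M-matrix is entrywise nonnegative. -/
lemma minv_entry_nonneg_aux {N : ℕ} (M : Matrix (Fin N) (Fin N) ℝ) (hpd : M.PosDef)
    (hoff : ∀ i j, i ≠ j → M i j ≤ 0)
    (hspec : ∀ μ ∈ spectrum ℝ M, μ ∈ Set.Ioc (0 : ℝ) 1) :
    ∀ i j, 0 ≤ M⁻¹ i j := by
  have hherm : M.IsHermitian := hpd.1
  set B : Matrix (Fin N) (Fin N) ℝ := 1 - M with hBdef
  have hBherm : B.IsHermitian := Matrix.isHermitian_one.sub hherm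
  -- spectrum of B lies in [0, 1)
  have hspecB : ∀ μ ∈ spectrum ℝ B, μ ∈ Set.Ico (0 : ℝ) 1 := by
    intro μ hμ
    have h1 : μ ∈ ({(1 : ℝ)} : Set ℝ) - spectrum ℝ M := by
      rw [spectrum.singleton_sub_eq]
      have : (algebraMap ℝ (Matrix (Fin N) (Fin N) ℝ)) 1 - M = B := by
        simp [hBdef, Algebra.algebraMap_eq_smul_one]
      rwa [this]
    obtain ⟨a, ha, b, hb, hab⟩ := h1
    rcases Set.mem_singleton_iff.mp ha with rfl
    obtain ⟨hb1, hb2⟩ := hspec b hb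
    have hab' : (1 : ℝ) - b = μ := hab
    constructor
    · linarith
    · linarith
  -- eigenvalues of B lie in [0, 1)
  have hev : ∀ l, hBherm.eigenvalues l ∈ Set.Ico (0 : ℝ) 1 := fun l =>
    hspecB _ (hBherm.eigenvalues_mem_spectrum_real l)
  -- B is positive semidefinite, hence has nonnegative diagonal
  have hBpsd : B.PosSemidef := (Matrix.IsHermitian.posSemidef_iff_eigenvalues_nonneg hBherm).mpr fun l => (hev l).1
  have hBdiag : ∀ i, 0 ≤ B i i := by
    intro i
    have h := hBpsd.dotProduct_mulVec_nonneg (Pi.single i 1)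
    simpa [dotProduct, Matrix.mulVec, Pi.single_apply, Finset.sum_ite_eq,
      Finset.sum_ite_eq'] using h
  -- B is entrywise nonnegative
  have hB : ∀ i j, 0 ≤ B i j := by
    intro i j
    by_cases h : i = j
    · exact h ▸ hBdiag i
    · have : B i j = -M i j := by simp [hBdef, Matrix.one_apply_ne h]
      rw [this]
      linarith [hoff i j h]
  -- spectral decomposition of powers of B
  obtain ⟨ev, U, hev0, hUU, hUU', hBeq⟩ :
      ∃ (ev : Fin N → ℝ) (U : Matrix (Fin N) (Fin N) ℝ),
        (∀ l, ev l ∈ Set.Ico (0 : ℝ) 1) ∧ star U * U = 1 ∧ U * star U = 1 ∧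
          B = U * Matrix.diagonal ev * star U := by
    refine ⟨hBherm.eigenvalues, (hBherm.eigenvectorUnitary : Matrix (Fin N) (Fin N) ℝ),
      hev, Matrix.UnitaryGroup.star_mul_self _,
      Matrix.mem_unitaryGroup_iff.mp hBherm.eigenvectorUnitary.2, ?_⟩
    have := hBherm.spectral_theorem
    simpa [RCLike.ofReal_real_eq_id, Function.comp] using this
  have hpow : ∀ m : ℕ, B ^ m = U * Matrix.diagonal (fun l => ev l ^ m) * star U := by
    intro m
    induction m with
    | zero =>
      simp [pow_zero, Matrix.diagonal_one, hUU']
    | succ m ih =>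
      rw [pow_succ, ih]
      nth_rewrite 1 [hBeq]
      rw [show U * Matrix.diagonal (fun l => ev l ^ m) * star U *
          (U * Matrix.diagonal ev * star U)
          = U * (Matrix.diagonal (fun l => ev l ^ m) * (star U * U) *
            Matrix.diagonal ev) * star U from by
          simp only [mul_assoc]]
      rw [hUU, mul_one, Matrix.diagonal_mul_diagonal]
      simp only [pow_succ]
  -- entry formula for powers of B
  have hpow_entry : ∀ (m : ℕ) (i j : Fin N),
      (B ^ m) i j = ∑ l, ev l ^ m * (U i l * U j l) := by
    intro m i j
    rw [hpow m, Matrix.mul_apply]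
    congr 1
    ext l
    rw [Matrix.mul_diagonal, Matrix.star_apply, star_trivial]
    ring
  -- each entry of B ^ m tends to zero
  have htend : ∀ i j : Fin N, Tendsto (fun m => (B ^ m) i j) atTop (𝓝 0) := by
    intro i j
    have : Tendsto (fun m => ∑ l, ev l ^ m * (U i l * U j l)) atTop
        (𝓝 (∑ l : Fin N, (0 : ℝ) * (U i l * U j l))) := by
      apply tendsto_finset_sum
      intro l _
      apply Tendsto.mul_const
      apply tendsto_pow_atTop_nhds_zero_of_abs_lt_one
      rw [abs_lt]
      constructor
      · linarith [(hev0 l).1]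
      · exact (hev0 l).2
    simp only [zero_mul, Finset.sum_const_zero] at this
    simpa only [hpow_entry] using this
  -- M is invertible
  have hdet : IsUnit M.det := isUnit_iff_ne_zero.mpr hpd.det_pos.ne'
  -- geometric sum identity
  have hS : ∀ m : ℕ, (∑ n ∈ Finset.range m, B ^ n) = M⁻¹ - B ^ m * M⁻¹ := by
    intro m
    have h1 : (∑ n ∈ Finset.range m, B ^ n) * (B - 1) = B ^ m - 1 := geom_sum_mul B m
    have h2 : (∑ n ∈ Finset.range m, B ^ n) * M = 1 - B ^ m := by
      have hB1 : B - 1 = -M := by rw [hBdef]; abel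
      rw [hB1, mul_neg] at h1
      rw [← neg_inj, h1, neg_sub]
    calc (∑ n ∈ Finset.range m, B ^ n)
        = (∑ n ∈ Finset.range m, B ^ n) * (M * M⁻¹) := by
          rw [Matrix.mul_nonsing_inv M hdet, mul_one]
      _ = ((∑ n ∈ Finset.range m, B ^ n) * M) * M⁻¹ := by rw [mul_assoc]
      _ = (1 - B ^ m) * M⁻¹ := by rw [h2]
      _ = M⁻¹ - B ^ m * M⁻¹ := by rw [sub_mul, one_mul]
  intro i j
  -- partial sums are nonnegative
  have hmono : ∀ m : ℕ, 0 ≤ (∑ n ∈ Finset.range m, B ^ n) i j := by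
    intro m
    rw [Matrix.sum_apply]
    exact Finset.sum_nonneg fun n _ => pow_entry_nonneg_aux hB n i j
  -- partial sums tend to M⁻¹ i j
  have htend2 : Tendsto (fun m => (∑ n ∈ Finset.range m, B ^ n) i j) atTop (𝓝 (M⁻¹ i j)) := by
    have heq : ∀ m, (∑ n ∈ Finset.range m, B ^ n) i j = M⁻¹ i j - (B ^ m * M⁻¹) i j := by
      intro m
      rw [hS m, Matrix.sub_apply]
    have h3 : Tendsto (fun m => (B ^ m * M⁻¹) i j) atTop (𝓝 0) := by
      have : Tendsto (fun m => ∑ l, (B ^ m) i l * M⁻¹ l j) atTop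
          (𝓝 (∑ l : Fin N, (0 : ℝ) * M⁻¹ l j)) := by
        apply tendsto_finset_sum
        intro l _
        exact (htend i l).mul_const _
      simp only [zero_mul, Finset.sum_const_zero] at this
      simpa only [Matrix.mul_apply] using this
    have : Tendsto (fun m => M⁻¹ i j - (B ^ m * M⁻¹) i j) atTop (𝓝 (M⁻¹ i j - 0)) :=
      tendsto_const_nhds.sub h3
    rw [sub_zero] at this
    simpa only [heq] using this
  exact ge_of_tendsto' htend2 hmono

set_option maxHeartbeats 1600000 in
/-- β = 1, m = k case of the BURA positivity theorem: if `c₀ ≥ 0`, `cⱼ ≥ 0`, `dⱼ < 0`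
and `A` is a normalized SPD M-matrix, then `c₀ A⁻¹ + ∑ cⱼ (A - dⱼ I)⁻¹` is doubly
nonnegative. -/
theorem bura_beta_one_doubly_nonneg {N : ℕ} (A : Matrix (Fin N) (Fin N) ℝ)
    (hsym : A.IsSymm) (hpd : A.PosDef)
    (hoff : ∀ i j, i ≠ j → A i j ≤ 0)
    (hspec : ∀ μ ∈ spectrum ℝ A, μ ∈ Set.Ioc (0 : ℝ) 1)
    (k : ℕ) (c₀ : ℝ) (c d : Fin k → ℝ)
    (hc₀ : 0 ≤ c₀) (hc : ∀ j, 0 ≤ c j) (hd : ∀ j, d j < 0) :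
    (c₀ • A⁻¹ + ∑ j : Fin k, c j • (A - d j • (1 : Matrix (Fin N) (Fin N) ℝ))⁻¹).PosSemidef ∧
    ∀ i i', 0 ≤ (c₀ • A⁻¹
        + ∑ j : Fin k, c j • (A - d j • (1 : Matrix (Fin N) (Fin N) ℝ))⁻¹) i i' := by
  -- positive definiteness of each resolvent matrix
  have hterm_pd : ∀ j : Fin k, (A - d j • (1 : Matrix (Fin N) (Fin N) ℝ)).PosDef := by
    intro j
    have h1 : ((-(d j)) • (1 : Matrix (Fin N) (Fin N) ℝ)).PosDef :=
      posDef_smul_aux Matrix.PosDef.one (by linarith [hd j])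
    have : A - d j • (1 : Matrix (Fin N) (Fin N) ℝ)
        = A + (-(d j)) • (1 : Matrix (Fin N) (Fin N) ℝ) := by
      rw [neg_smul, sub_eq_add_neg]
    rw [this]
    exact hpd.add h1
  -- entrywise nonnegativity of each inverse
  have hterm_nonneg : ∀ (j : Fin k) (i i' : Fin N),
      0 ≤ (A - d j • (1 : Matrix (Fin N) (Fin N) ℝ))⁻¹ i i' := by
    intro j i i'
    set e := d j with he_def
    have he : e < 0 := hd j
    set u : ℝ := 1 - e with hu_def
    have hu : 0 < u := by simp only [hu_def]; linarith
    obtain ⟨Mj, hMj_def⟩ : ∃ Mj' : Matrix (Fin N) (Fin N) ℝ,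
        Mj' = u⁻¹ • (A - e • (1 : Matrix (Fin N) (Fin N) ℝ)) := ⟨_, rfl⟩
    have hMj_pd : Mj.PosDef := by
      rw [hMj_def]; exact posDef_smul_aux (hterm_pd j) (inv_pos.mpr hu)
    have hMj_off : ∀ i₁ i₂, i₁ ≠ i₂ → Mj i₁ i₂ ≤ 0 := by
      intro i₁ i₂ hne
      have : Mj i₁ i₂ = u⁻¹ * A i₁ i₂ := by
        simp [hMj_def, Matrix.sub_apply, Matrix.one_apply_ne hne]
      rw [this]
      exact mul_nonpos_of_nonneg_of_nonpos (le_of_lt (inv_pos.mpr hu)) (hoff i₁ i₂ hne)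
    have hMj_spec : ∀ μ ∈ spectrum ℝ Mj, μ ∈ Set.Ioc (0 : ℝ) 1 := by
      intro μ hμ
      have hune : (u⁻¹ : ℝ) ≠ 0 := by positivity
      have hμ' : μ ∈ spectrum ℝ ((Units.mk0 u⁻¹ hune : ℝˣ) •
          (A - e • (1 : Matrix (Fin N) (Fin N) ℝ))) := by
        have heq : (Units.mk0 u⁻¹ hune : ℝˣ) •
            (A - e • (1 : Matrix (Fin N) (Fin N) ℝ)) = Mj := by
          rw [Units.smul_def, Units.val_mk0, hMj_def]
        rw [heq]
        exact hμ
      rw [spectrum.unit_smul_eq_smul] at hμ'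
      obtain ⟨ν, hν, hνμ⟩ := hμ'
      have hν' : ν ∈ spectrum ℝ A - ({e} : Set ℝ) := by
        rw [spectrum.sub_singleton_eq]
        have : A - (algebraMap ℝ (Matrix (Fin N) (Fin N) ℝ)) e
            = A - e • (1 : Matrix (Fin N) (Fin N) ℝ) := by
          rw [Algebra.algebraMap_eq_smul_one]
        rwa [this]
      obtain ⟨lam, hlam, b, hb, hlamb⟩ := hν'
      rcases Set.mem_singleton_iff.mp hb with rfl
      obtain ⟨hl1, hl2⟩ := hspec lam hlam
      have hμ_eq : μ = u⁻¹ * (lam - e) := by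
        rw [← hνμ, ← hlamb]
        simp [Units.smul_def, smul_eq_mul]
      constructor
      · rw [hμ_eq]
        have : 0 < lam - e := by linarith
        positivity
      · rw [hμ_eq]
        have hle : lam - e ≤ u := by rw [hu_def]; linarith
        calc u⁻¹ * (lam - e) ≤ u⁻¹ * u :=
              mul_le_mul_of_nonneg_left hle (le_of_lt (inv_pos.mpr hu))
          _ = 1 := inv_mul_cancel₀ hu.ne'
    have hkey := minv_entry_nonneg_aux Mj hMj_pd hMj_off hMj_spec
    have hdetMj : IsUnit Mj.det := isUnit_iff_ne_zero.mpr hMj_pd.det_pos.ne'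
    have hinv_eq : (A - e • (1 : Matrix (Fin N) (Fin N) ℝ))⁻¹ = u⁻¹ • Mj⁻¹ := by
      have hAe : A - e • (1 : Matrix (Fin N) (Fin N) ℝ) = u • Mj := by
        rw [hMj_def, smul_smul, mul_inv_cancel₀ hu.ne', one_smul]
      apply Matrix.inv_eq_right_inv
      rw [hAe, Matrix.smul_mul, Matrix.mul_smul, Matrix.mul_nonsing_inv _ hdetMj,
        smul_smul, mul_inv_cancel₀ hu.ne', one_smul]
    rw [hinv_eq, Matrix.smul_apply, smul_eq_mul]
    exact mul_nonneg (le_of_lt (inv_pos.mpr hu)) (hkey i i')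
  -- entrywise nonnegativity of A⁻¹
  have hA_nonneg : ∀ i i', 0 ≤ A⁻¹ i i' := minv_entry_nonneg_aux A hpd hoff hspec
  constructor
  · -- positive semidefiniteness
    apply Matrix.PosSemidef.add
    · exact posSemidef_smul_aux hpd.inv.posSemidef hc₀
    · apply Finset.sum_induction _ Matrix.PosSemidef
        (fun _ _ h₁ h₂ => h₁.add h₂) Matrix.PosSemidef.zero
      intro j _
      exact posSemidef_smul_aux (hterm_pd j).inv.posSemidef (hc j)
  · -- entrywise nonnegativity
    intro i i'
    rw [Matrix.add_apply, Matrix.smul_apply, Matrix.sum_apply, smul_eq_mul]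
    apply add_nonneg
    · exact mul_nonneg hc₀ (hA_nonneg i i')
    · apply Finset.sum_nonneg
      intro j _
      rw [Matrix.smul_apply, smul_eq_mul]
      exact mul_nonneg (hc j) (hterm_nonneg j i i')
end

section
/- Let A be symmetric with spectrum in (0,1], α ∈ (0,1), and r a rational function with |t^{1−α} − r(t)| ≤ E on [0,1]. Then for the finite-difference fractional Poisson solution u_h = (h/2)^{2α} A^{−α} f and its BURA approximation u_{h,r} = (h/2)^{2α} A^{−1} r(A) f, the scaled ℓ² relative error satisfies ‖u_{h,r} − u_h‖₂ / ‖f‖₂ ≤ h^{-2} (h/2)^{2α} E, provided the smallest eigenvalue of A exceeds h². -/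
open Matrix

lemma orth_dot {N : ℕ} (W : Matrix (Fin N) (Fin N) ℝ) (hW : Wᵀ * W = 1)
    (w : Fin N → ℝ) : (W.mulVec w) ⬝ᵥ (W.mulVec w) = w ⬝ᵥ w := by
  rw [Matrix.dotProduct_mulVec, ← Matrix.vecMul_transpose, Matrix.vecMul_vecMul, hW,
    Matrix.vecMul_one]

/-- ℓ² relative error bound for the BURA approximation of the discretized fractional
Poisson solution: `‖u_{h,r} - u_h‖₂ ≤ h⁻² (h/2)^{2α} E ‖f‖₂`. -/
theorem bura_l2_error {N : ℕ} (W : Matrix (Fin N) (Fin N) ℝ) (Λ : Fin N → ℝ)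
    (hW : W * Wᵀ = 1) (hΛ : ∀ i, Λ i ∈ Set.Ioc (0 : ℝ) 1)
    (α : ℝ) (hα : α ∈ Set.Ioo (0 : ℝ) 1) (r : ℝ → ℝ) (E : ℝ)
    (hr : ∀ t ∈ Set.Icc (0 : ℝ) 1, |Real.rpow t (1 - α) - r t| ≤ E)
    (h : ℝ) (hh : 0 < h) (hsmall : ∀ i, h ^ 2 < Λ i)
    (f : Fin N → ℝ) :
    let uh := Real.rpow (h / 2) (2 * α) • (matPow W Λ (-α)).mulVec f
    let uhr := Real.rpow (h / 2) (2 * α) •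
      (matPow W Λ (-1) * (W * Matrix.diagonal (fun i => r (Λ i)) * Wᵀ)).mulVec f
    Real.sqrt ((uhr - uh) ⬝ᵥ (uhr - uh)) ≤
      (h ^ 2)⁻¹ * Real.rpow (h / 2) (2 * α) * E * Real.sqrt (f ⬝ᵥ f) := by
  intro uh uhr
  have hWtW : Wᵀ * W = 1 := mul_eq_one_comm.mp hW
  set c := Real.rpow (h / 2) (2 * α) with hc
  have hc0 : 0 ≤ c := Real.rpow_nonneg (by linarith) _
  have hE0 : 0 ≤ E := le_trans (abs_nonneg _) (hr 0 ⟨le_refl _, by norm_num⟩)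
  set d : Fin N → ℝ := fun i => Real.rpow (Λ i) (-1) * r (Λ i) - Real.rpow (Λ i) (-α) with hd
  -- matrix identity
  have hM : matPow W Λ (-1) * (W * Matrix.diagonal (fun i => r (Λ i)) * Wᵀ) - matPow W Λ (-α)
      = W * Matrix.diagonal d * Wᵀ := by
    have h1 : matPow W Λ (-1) * (W * Matrix.diagonal (fun i => r (Λ i)) * Wᵀ)
        = W * Matrix.diagonal (fun i => Real.rpow (Λ i) (-1) * r (Λ i)) * Wᵀ := by
      simp only [matPow]
      rw [Matrix.mul_assoc (W * Matrix.diagonal fun i => Real.rpow (Λ i) (-1)) Wᵀ]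
      rw [show Wᵀ * (W * Matrix.diagonal (fun i => r (Λ i)) * Wᵀ)
          = Matrix.diagonal (fun i => r (Λ i)) * Wᵀ by
        rw [← Matrix.mul_assoc, ← Matrix.mul_assoc, hWtW, Matrix.one_mul]]
      rw [← Matrix.mul_assoc, Matrix.mul_assoc W, Matrix.diagonal_mul_diagonal]
    rw [h1, matPow, hd, ← Matrix.diagonal_sub, Matrix.mul_sub, Matrix.sub_mul]
  have hdiff : uhr - uh = c • ((W * Matrix.diagonal d * Wᵀ).mulVec f) := by
    rw [← hM, show uhr - uh = c • ((matPow W Λ (-1) * (W * Matrix.diagonal (fun i => r (Λ i)) * Wᵀ)).mulVec f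
      - (matPow W Λ (-α)).mulVec f) from (smul_sub c _ _).symm, Matrix.sub_mulVec]
  set g := Wᵀ.mulVec f with hg
  have hgg : g ⬝ᵥ g = f ⬝ᵥ f := by
    have := orth_dot Wᵀ (by rwa [Matrix.transpose_transpose]) f
    simpa [hg] using this
  have hv : (W * Matrix.diagonal d * Wᵀ).mulVec f
      = W.mulVec ((Matrix.diagonal d).mulVec g) := by
    rw [hg, Matrix.mulVec_mulVec, Matrix.mulVec_mulVec]
  -- bound on d
  have hdb : ∀ i, |d i| ≤ (h ^ 2)⁻¹ * E := by
    intro i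
    have hpos : 0 < Λ i := (hΛ i).1
    have hsplit : Real.rpow (Λ i) (-α) = Real.rpow (Λ i) (-1) * Real.rpow (Λ i) (1 - α) := by
      show (Λ i) ^ (-α : ℝ) = (Λ i) ^ (-1 : ℝ) * (Λ i) ^ (1 - α)
      rw [← Real.rpow_add hpos]; ring_nf
    have : d i = Real.rpow (Λ i) (-1) * (r (Λ i) - Real.rpow (Λ i) (1 - α)) := by
      simp only [hd, hsplit]; ring
    rw [this, abs_mul]
    have h1 : |Real.rpow (Λ i) (-1)| = (Λ i)⁻¹ := by
      show |(Λ i) ^ (-1 : ℝ)| = (Λ i)⁻¹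
      rw [Real.rpow_neg_one, abs_inv, abs_of_pos hpos]
    have h2 : |r (Λ i) - Real.rpow (Λ i) (1 - α)| ≤ E := by
      rw [abs_sub_comm]; exact hr (Λ i) ⟨le_of_lt hpos, (hΛ i).2⟩
    rw [h1]
    have h3 : (Λ i)⁻¹ ≤ (h ^ 2)⁻¹ :=
      inv_anti₀ (by positivity) (le_of_lt (hsmall i))
    calc (Λ i)⁻¹ * |r (Λ i) - Real.rpow (Λ i) (1 - α)| ≤ (Λ i)⁻¹ * E :=
          mul_le_mul_of_nonneg_left h2 (by positivity)
      _ ≤ (h ^ 2)⁻¹ * E := mul_le_mul_of_nonneg_right h3 hE0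
  -- compute the squared norm
  have hdot : (uhr - uh) ⬝ᵥ (uhr - uh)
      = c ^ 2 * (((Matrix.diagonal d).mulVec g) ⬝ᵥ ((Matrix.diagonal d).mulVec g)) := by
    rw [hdiff, hv, smul_dotProduct, dotProduct_smul,
      orth_dot W hWtW]
    simp only [smul_eq_mul]; ring
  have hsum : ((Matrix.diagonal d).mulVec g) ⬝ᵥ ((Matrix.diagonal d).mulVec g)
      ≤ ((h ^ 2)⁻¹ * E) ^ 2 * (g ⬝ᵥ g) := by
    simp only [dotProduct, Matrix.mulVec_diagonal, Finset.mul_sum]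
    apply Finset.sum_le_sum
    intro i _
    have := hdb i
    have h1 : (d i * g i) * (d i * g i) = (d i)^2 * (g i * g i) := by ring
    rw [h1]
    have h2 : (d i)^2 ≤ ((h ^ 2)⁻¹ * E)^2 := by
      rw [← sq_abs (d i)]
      exact pow_le_pow_left₀ (abs_nonneg _) this 2
    nlinarith [sq_nonneg (g i), mul_self_nonneg (g i)]
  have hK : 0 ≤ (h ^ 2)⁻¹ * E := by positivity
  calc Real.sqrt ((uhr - uh) ⬝ᵥ (uhr - uh))
      ≤ Real.sqrt (c ^ 2 * (((h ^ 2)⁻¹ * E) ^ 2 * (f ⬝ᵥ f))) := by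
        apply Real.sqrt_le_sqrt
        rw [hdot, ← hgg]
        exact mul_le_mul_of_nonneg_left hsum (sq_nonneg c)
    _ = (h ^ 2)⁻¹ * c * E * Real.sqrt (f ⬝ᵥ f) := by
        rw [Real.sqrt_mul (sq_nonneg c), Real.sqrt_mul (sq_nonneg _),
          Real.sqrt_sq hc0, Real.sqrt_sq hK]
        ring
end
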